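/- Let 2 < p < ∞ and E(f) = ‖f‖_p² on L^p(Ω,μ). Then for all f₁, f₂ ∈ L^p: E(f₂) ≥ E(f₁) + ⟨f₂-f₁, ∇E(f₁)⟩ + (1/(4p))(2/3)^{p-1}(‖f₁‖_p + ‖f₂‖_p)^{2-p} ‖f₂-f₁‖_p^p, where ⟨f,g⟩ = 2Re∫f*g dμ. -/

import Mathlib

open MeasureTheory

noncomputable section

/-- The `L^p` norm (with real exponent `p`) of `f`. -/
def np {Ω : Type*} [MeasurableSpace Ω] (μ : Measure Ω) (p : ℝ) (f : Ω → ℂ) : ℝ :=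
  (eLpNorm f (ENNReal.ofReal p) μ).toReal

/-- The real pairing `⟨f,g⟩ = 2 Re ∫ f* g dμ`. -/
def pairL {Ω : Type*} [MeasurableSpace Ω] (μ : Measure Ω) (f g : Ω → ℂ) : ℝ :=
  2 * (∫ x, (starRingEnd ℂ) (f x) * g x ∂μ).re

/-- The gradient `∇E(f) = ‖f‖_p^{2-p} |f|^{p-1} sgn f = ‖f‖_p^{2-p} |f|^{p-2} f`
of `E(f) = ‖f‖_p²`. -/
def gradE {Ω : Type*} [MeasurableSpace Ω] (μ : Measure Ω) (p : ℝ) (f : Ω → ℂ) : Ω → ℂ :=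
  fun x => ((np μ p f ^ (2 - p) * ‖f x‖ ^ (p - 2) : ℝ)) • f x

/-!
Write `A = ‖f₁‖_p`, `B = ‖f₂‖_p`, `δ = ‖f₂ - f₁‖_p` and `J f = |f|^{p-2} f` (`dualMap p f`), so that
`∇E(f₁) = A^{2-p} J f₁` and `⟨f₂ - f₁, ∇E(f₁)⟩ = A^{2-p}⟨f₂, J f₁⟩ - 2A²`.
For unit vectors `u, w`, Clarkson's inequality `‖w + u‖^p + ‖w - u‖^p ≤ 2^p` and Bernoulli's
inequality give `‖w + u‖_p ≤ 2 - ‖w - u‖_p^p / (p 2^{p-1})`; pairing `w + u` with `J u` and using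
Hölder then yields `⟨w, J u⟩ ≤ 2(1 - ‖w - u‖_p^p / (p 2^{p-1}))`. Applied to `u = f₁/A`, `w = f₂/B`
with `σ = ‖w - u‖_p`, this bounds `A^{2-p}⟨f₂, J f₁⟩` by `2AB(1 - σ^p / (p 2^{p-1}))`, while the
triangle inequality gives `δ ≤ min(A, B) σ + |B - A|`. What remains is an inequality between the
four reals `A, B, δ, σ`: if `δ ≤ 3|B - A|` the term `(B - A)²` absorbs the left side, and otherwise
`min(A, B) σ ≥ 2δ/3` and the `σ^p` term does.
-/

lemma Real.rpow_add_le_two_rpow_mul_add_rpow {q a b : ℝ} (hq : 1 ≤ q) (ha : 0 ≤ a)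
    (hb : 0 ≤ b) :
    (a + b) ^ q ≤ 2 ^ (q - 1) * (a ^ q + b ^ q) := by
  lift a to NNReal using ha
  lift b to NNReal using hb
  exact_mod_cast NNReal.rpow_add_le_mul_rpow_add_rpow a b hq

lemma norm_add_rpow_add_norm_sub_rpow_le {𝕜 E : Type*} [RCLike 𝕜] [NormedAddCommGroup E]
    [InnerProductSpace 𝕜 E] {p : ℝ} (hp : 2 ≤ p) (x y : E) :
    ‖x + y‖ ^ p + ‖x - y‖ ^ p ≤ 2 ^ (p - 1) * (‖x‖ ^ p + ‖y‖ ^ p) := by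
  set q := p / 2
  have hq : 1 ≤ q := by rw [le_div_iff₀ two_pos]; linarith
  have hsq (z : E) : ‖z‖ ^ p = (‖z‖ ^ 2) ^ q := by
    rw [← Real.rpow_natCast, ← Real.rpow_mul (norm_nonneg z)]
    norm_num [q]
    ring_nf
  have hpar : ‖x + y‖ ^ 2 + ‖x - y‖ ^ 2 = 2 * (‖x‖ ^ 2 + ‖y‖ ^ 2) := by
    simpa [sq] using parallelogram_law_with_norm 𝕜 x y
  calc ‖x + y‖ ^ p + ‖x - y‖ ^ p = (‖x + y‖ ^ 2) ^ q + (‖x - y‖ ^ 2) ^ q := by rw [hsq, hsq]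
    _ ≤ (‖x + y‖ ^ 2 + ‖x - y‖ ^ 2) ^ q :=
      Real.add_rpow_le_rpow_add (by positivity) (by positivity) hq
    _ = 2 ^ q * (‖x‖ ^ 2 + ‖y‖ ^ 2) ^ q := by
      rw [hpar, Real.mul_rpow zero_le_two (by positivity)]
    _ ≤ 2 ^ q * (2 ^ (q - 1) * ((‖x‖ ^ 2) ^ q + (‖y‖ ^ 2) ^ q)) := by
      gcongr
      exact Real.rpow_add_le_two_rpow_mul_add_rpow hq (by positivity) (by positivity)
    _ = 2 ^ (p - 1) * (‖x‖ ^ p + ‖y‖ ^ p) := by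
      rw [← mul_assoc, ← Real.rpow_add two_pos, ← hsq, ← hsq]
      congr 2
      ring

lemma le_two_sub_of_rpow_add_rpow_le {p a b : ℝ} (hp : 1 ≤ p) (ha : 0 ≤ a)
    (h : a ^ p + b ^ p ≤ 2 ^ p) : a ≤ 2 - b ^ p / (p * 2 ^ (p - 1)) := by
  have hp0 : 0 < p := by linarith
  set t := b ^ p / 2 ^ p
  have ht : t ≤ 1 := div_le_one_of_le₀ (by linarith [Real.rpow_nonneg ha p]) (by positivity)
  have htb : 2 ^ p * t = b ^ p := mul_div_cancel₀ _ (by positivity)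
  have hc : 2 - b ^ p / (p * 2 ^ (p - 1)) = 2 * (1 + -(t / p)) := by
    rw [Real.rpow_sub_one two_ne_zero]
    field_simp
    rw [← htb]
    ring
  have hst : -1 ≤ -(t / p) := by
    rw [neg_le_neg_iff, div_le_one hp0]
    linarith
  rw [hc, ← Real.rpow_le_rpow_iff ha (by linarith) hp0, Real.mul_rpow zero_le_two (by linarith)]
  calc a ^ p ≤ 2 ^ p * (1 + p * -(t / p)) := by
        rw [mul_neg, mul_div_cancel₀ t hp0.ne']
        linarith
    _ ≤ 2 ^ p * (1 + -(t / p)) ^ p := by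
        gcongr
        exact one_add_mul_self_le_rpow_one_add hst hp

lemma rpow_two_sub_mul_rpow_le_sq {p c δ : ℝ} (hp : 2 ≤ p) (hδ : 0 ≤ δ) (hδc : δ ≤ c) :
    c ^ (2 - p) * δ ^ p ≤ δ ^ 2 := by
  rcases hδ.eq_or_lt with rfl | hδ
  · rw [Real.zero_rpow (by linarith)]
    simp
  have hc : 0 < c := hδ.trans_le hδc
  calc c ^ (2 - p) * δ ^ p = δ ^ (2 : ℝ) * (c ^ (2 - p) * δ ^ (p - 2)) := by
        rw [mul_left_comm, ← Real.rpow_add hδ]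
        ring_nf
    _ ≤ δ ^ (2 : ℝ) * (c ^ (2 - p) * c ^ (p - 2)) := by
        gcongr
    _ = δ ^ 2 := by
        rw [← Real.rpow_add hc]
        norm_num

lemma rpow_two_sub_mul_rpow_sub_one {p A : ℝ} (hA : 0 ≤ A) : A ^ (2 - p) * A ^ (p - 1) = A := by
  rw [← Real.rpow_add' hA (by norm_num)]
  norm_num

lemma scalar_convexity_bound {p A B δ σ : ℝ} (hp : 2 ≤ p) (hA : 0 ≤ A) (hB : 0 ≤ B)
    (hδ : 0 ≤ δ) (hσ : 0 ≤ σ) (hδAB : δ ≤ A + B) (hδσ : δ ≤ min A B * σ + |B - A|) :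
    1 / (4 * p) * (2 / 3) ^ (p - 1) * (A + B) ^ (2 - p) * δ ^ p ≤
      (B - A) ^ 2 + 2 * A * B * σ ^ p / (p * 2 ^ (p - 1)) := by
  have hp0 : 0 < p := by linarith
  have hσterm : 0 ≤ 2 * A * B * σ ^ p / (p * 2 ^ (p - 1)) := by positivity
  rcases le_or_gt δ (3 * |B - A|) with hsmall | hlarge
  · have hcoef : 1 / (4 * p) * (2 / 3 : ℝ) ^ (p - 1) ≤ 1 / 8 * (2 / 3) := by
      gcongr
      · linarith
      · simpa using Real.rpow_le_rpow_of_exponent_ge (by norm_num : (0 : ℝ) < 2 / 3)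
          (by norm_num) (show 1 ≤ p - 1 by linarith)
    have hsq : δ ^ 2 ≤ 9 * (B - A) ^ 2 := by
      nlinarith [abs_nonneg (B - A), sq_abs (B - A)]
    calc 1 / (4 * p) * (2 / 3) ^ (p - 1) * (A + B) ^ (2 - p) * δ ^ p
        = 1 / (4 * p) * (2 / 3) ^ (p - 1) * ((A + B) ^ (2 - p) * δ ^ p) := by ring
      _ ≤ 1 / 8 * (2 / 3) * δ ^ 2 :=
        mul_le_mul hcoef (rpow_two_sub_mul_rpow_le_sq hp hδ hδAB) (by positivity) (by norm_num)
      _ ≤ _ := by nlinarith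
  · set m := min A B
    set M := max A B
    have hm0 : 0 ≤ m := le_min hA hB
    have hmσ : 2 / 3 * δ ≤ m * σ := by linarith [abs_nonneg (B - A)]
    have hm : 0 < m := by
      refine hm0.lt_of_ne fun h => ?_
      rw [← h, zero_mul] at hmσ
      linarith [abs_nonneg (B - A)]
    have hpow : (2 * m) ^ (p - 1) * (A + B) ^ (2 - p) ≤ 2 * M := by
      calc (2 * m) ^ (p - 1) * (A + B) ^ (2 - p) ≤ (A + B) ^ (p - 1) * (A + B) ^ (2 - p) := by
            gcongr
            · linarith
            · linarith [min_le_left A B, min_le_right A B]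
        _ = A + B := by
            rw [← Real.rpow_add' (by linarith) (by norm_num)]
            norm_num
        _ ≤ 2 * M := by linarith [le_max_left A B, le_max_right A B]
    calc 1 / (4 * p) * (2 / 3) ^ (p - 1) * (A + B) ^ (2 - p) * δ ^ p
        = 3 / (8 * p) * ((2 / 3 * δ) ^ p * (A + B) ^ (2 - p)) := by
          rw [Real.rpow_sub_one (by norm_num), Real.mul_rpow (by norm_num) hδ]
          ring
      _ ≤ 3 / (8 * p) * ((m * σ) ^ p * (A + B) ^ (2 - p)) := by gcongr
      _ = 3 / (8 * p) * m * σ ^ p * ((2 * m) ^ (p - 1) * (A + B) ^ (2 - p)) / 2 ^ (p - 1) := by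
          rw [Real.mul_rpow hm0 hσ, Real.mul_rpow zero_le_two hm0, Real.rpow_sub_one hm.ne']
          field_simp
      _ ≤ 3 / (8 * p) * m * σ ^ p * (2 * M) / 2 ^ (p - 1) := by gcongr
      _ = 3 / 8 * (2 * A * B * σ ^ p / (p * 2 ^ (p - 1))) := by
          rw [mul_assoc 2 A B, ← min_mul_max A B]
          field_simp
          ring
      _ ≤ _ := by nlinarith [sq_nonneg (B - A)]

section LpNorm

variable {Ω : Type*} [MeasurableSpace Ω] {μ : Measure Ω} {p : ℝ} {f g : Ω → ℂ}

lemma np_nonneg (f : Ω → ℂ) : 0 ≤ np μ p f := ENNReal.toReal_nonneg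

lemma np_eq_integral_rpow (hp : 0 < p) (hf : MemLp f (ENNReal.ofReal p) μ) :
    np μ p f = (∫ x, ‖f x‖ ^ p ∂μ) ^ (1 / p) := by
  have hI : 0 ≤ ∫ x, ‖f x‖ ^ p ∂μ := integral_nonneg fun x => by positivity
  rw [np, hf.eLpNorm_eq_integral_rpow_norm (by simpa using hp) ENNReal.ofReal_ne_top,
    ENNReal.toReal_ofReal hp.le, ENNReal.toReal_ofReal (by positivity), one_div]

lemma np_rpow_eq_integral (hp : 0 < p) (hf : MemLp f (ENNReal.ofReal p) μ) :
    np μ p f ^ p = ∫ x, ‖f x‖ ^ p ∂μ := by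
  rw [np_eq_integral_rpow hp hf, ← Real.rpow_mul (integral_nonneg fun x => by positivity),
    one_div_mul_cancel hp.ne', Real.rpow_one]

lemma np_smul (c : ℝ) (f : Ω → ℂ) : np μ p (c • f) = |c| * np μ p f := by
  simp [np, eLpNorm_const_smul, ENNReal.toReal_mul]

lemma np_add_le (hp : 1 ≤ p) (hf : MemLp f (ENNReal.ofReal p) μ)
    (hg : MemLp g (ENNReal.ofReal p) μ) : np μ p (f + g) ≤ np μ p f + np μ p g := by
  rw [np, np, np, ← ENNReal.toReal_add hf.eLpNorm_ne_top hg.eLpNorm_ne_top]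
  exact ENNReal.toReal_mono (ENNReal.add_ne_top.2 ⟨hf.eLpNorm_ne_top, hg.eLpNorm_ne_top⟩)
    (eLpNorm_add_le hf.1 hg.1 (by simpa using hp))

lemma np_sub_le (hp : 1 ≤ p) (hf : MemLp f (ENNReal.ofReal p) μ)
    (hg : MemLp g (ENNReal.ofReal p) μ) : np μ p (f - g) ≤ np μ p f + np μ p g := by
  rw [np, np, np, ← ENNReal.toReal_add hf.eLpNorm_ne_top hg.eLpNorm_ne_top]
  exact ENNReal.toReal_mono (ENNReal.add_ne_top.2 ⟨hf.eLpNorm_ne_top, hg.eLpNorm_ne_top⟩)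
    (eLpNorm_sub_le hf.1 hg.1 (by simpa using hp))

lemma np_add_rpow_add_np_sub_rpow_le (hp : 2 ≤ p) (hf : MemLp f (ENNReal.ofReal p) μ)
    (hg : MemLp g (ENNReal.ofReal p) μ) :
    np μ p (f + g) ^ p + np μ p (f - g) ^ p ≤ 2 ^ (p - 1) * (np μ p f ^ p + np μ p g ^ p) := by
  have hp0 : 0 < p := by linarith
  have hInt {h : Ω → ℂ} (hh : MemLp h (ENNReal.ofReal p) μ) :
      Integrable (fun x => ‖h x‖ ^ p) μ := by
    simpa [hp0.le] using hh.integrable_norm_rpow (by simpa using hp0) ENNReal.ofReal_ne_top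
  rw [np_rpow_eq_integral hp0 hf, np_rpow_eq_integral hp0 hg, np_rpow_eq_integral hp0 (hf.add hg),
    np_rpow_eq_integral hp0 (hf.sub hg), ← integral_add (hInt (hf.add hg)) (hInt (hf.sub hg)),
    ← integral_add (hInt hf) (hInt hg), ← integral_const_mul]
  exact integral_mono ((hInt (hf.add hg)).add (hInt (hf.sub hg)))
    (((hInt hf).add (hInt hg)).const_mul _) fun x =>
      norm_add_rpow_add_norm_sub_rpow_le (𝕜 := ℂ) hp (f x) (g x)

lemma np_smul_sub_smul_le (hp : 1 ≤ p) {u w : Ω → ℂ} (hu : MemLp u (ENNReal.ofReal p) μ)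
    (hw : MemLp w (ENNReal.ofReal p) μ) (hnu : np μ p u = 1) (hnw : np μ p w = 1) {A B : ℝ}
    (hA : 0 ≤ A) (hB : 0 ≤ B) :
    np μ p (B • w - A • u) ≤ min A B * np μ p (w - u) + |B - A| := by
  have hwu : MemLp (w - u) (ENNReal.ofReal p) μ := hw.sub hu
  rw [min_mul_of_nonneg _ _ (np_nonneg _), ← min_add_add_right, le_min_iff]
  constructor
  · calc np μ p (B • w - A • u) = np μ p (A • (w - u) + (B - A) • w) := by congr 1; module
      _ ≤ A * np μ p (w - u) + |B - A| := by
          refine (np_add_le hp (hwu.const_smul A) (hw.const_smul _)).trans ?_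
          rw [np_smul, np_smul, hnw, abs_of_nonneg hA, mul_one]
  · calc np μ p (B • w - A • u) = np μ p (B • (w - u) + (B - A) • u) := by congr 1; module
      _ ≤ B * np μ p (w - u) + |B - A| := by
          refine (np_add_le hp (hwu.const_smul B) (hu.const_smul _)).trans ?_
          rw [np_smul, np_smul, hnu, abs_of_nonneg hB, mul_one]

end LpNorm

def dualMap {Ω : Type*} (p : ℝ) (f : Ω → ℂ) : Ω → ℂ := fun x => (‖f x‖ ^ (p - 2) : ℝ) • f x

section DualMap

variable {Ω : Type*} {p : ℝ}

lemma norm_dualMap (hp : 2 ≤ p) (f : Ω → ℂ) (x : Ω) : ‖dualMap p f x‖ = ‖f x‖ ^ (p - 1) := by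
  rw [dualMap, norm_smul, Real.norm_of_nonneg (by positivity),
    ← Real.rpow_add_one' (norm_nonneg _) (by linarith)]
  ring_nf

lemma dualMap_smul (hp : 2 ≤ p) {c : ℝ} (hc : 0 ≤ c) (f : Ω → ℂ) :
    dualMap p (c • f) = c ^ (p - 1) • dualMap p f := by
  funext x
  simp only [dualMap, Pi.smul_apply, norm_smul, Real.norm_of_nonneg hc, smul_smul]
  rw [Real.mul_rpow hc (norm_nonneg _), mul_right_comm, ← Real.rpow_add_one' hc (by linarith)]
  ring_nf

lemma conj_mul_dualMap (hp : 2 ≤ p) (f : Ω → ℂ) (x : Ω) :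
    starRingEnd ℂ (f x) * dualMap p f x = ((‖f x‖ ^ p : ℝ) : ℂ) := by
  rw [dualMap, mul_smul_comm, mul_comm, Complex.mul_conj, Complex.normSq_eq_norm_sq,
    Complex.real_smul]
  norm_cast
  rw [← Real.rpow_two, ← Real.rpow_add' (norm_nonneg _) (by linarith)]
  ring_nf

end DualMap

section Duality

variable {Ω : Type*} [MeasurableSpace Ω] {μ : Measure Ω} {p : ℝ} {f g h : Ω → ℂ}

lemma gradE_eq_smul_dualMap (μ : Measure Ω) (p : ℝ) (f : Ω → ℂ) :
    gradE μ p f = np μ p f ^ (2 - p) • dualMap p f := by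
  funext x
  simp [gradE, dualMap, mul_smul]

lemma memLp_dualMap (hp : 2 ≤ p) (hf : MemLp f (ENNReal.ofReal p) μ) :
    MemLp (dualMap p f) (ENNReal.ofReal (p / (p - 1))) μ := by
  have hp1 : 0 < p - 1 := by linarith
  refine ⟨((Real.continuous_rpow_const (by linarith)).comp_aestronglyMeasurable
    hf.1.norm).smul hf.1, ?_⟩
  have hq : ENNReal.ofReal (p / (p - 1)) * ENNReal.ofReal (p - 1) = ENNReal.ofReal p := by
    rw [← ENNReal.ofReal_mul (by positivity), div_mul_cancel₀ _ hp1.ne']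
  rw [eLpNorm_congr_norm_ae (g := fun x => ‖f x‖ ^ (p - 1)) (ae_of_all _ fun x => by
      rw [norm_dualMap hp, Real.norm_of_nonneg (by positivity)]),
    eLpNorm_norm_rpow f hp1, hq]
  exact ENNReal.rpow_lt_top_of_nonneg hp1.le hf.eLpNorm_ne_top

lemma integrable_conj_mul_dualMap (hp : 2 ≤ p) (hg : MemLp g (ENNReal.ofReal p) μ)
    (hf : MemLp f (ENNReal.ofReal p) μ) :
    Integrable (fun x => starRingEnd ℂ (g x) * dualMap p f x) μ := by
  have hpq : p.HolderConjugate (p / (p - 1)) := Real.HolderConjugate.conjExponent (by linarith)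
  have : ENNReal.HolderTriple (ENNReal.ofReal p) (ENNReal.ofReal (p / (p - 1))) 1 :=
    ⟨by simpa using hpq.inv_add_inv_ennreal⟩
  exact hg.star.integrable_mul (memLp_dualMap hp hf)

lemma pairL_add_left (hf : Integrable (fun x => starRingEnd ℂ (f x) * h x) μ)
    (hg : Integrable (fun x => starRingEnd ℂ (g x) * h x) μ) :
    pairL μ (f + g) h = pairL μ f h + pairL μ g h := by
  simp only [pairL, Pi.add_apply, map_add, add_mul, integral_add hf hg, Complex.add_re]
  ring

lemma pairL_sub_left (hf : Integrable (fun x => starRingEnd ℂ (f x) * h x) μ)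
    (hg : Integrable (fun x => starRingEnd ℂ (g x) * h x) μ) :
    pairL μ (f - g) h = pairL μ f h - pairL μ g h := by
  simp only [pairL, Pi.sub_apply, map_sub, sub_mul, integral_sub hf hg, Complex.sub_re]
  ring

lemma pairL_smul_left (c : ℝ) (f h : Ω → ℂ) : pairL μ (c • f) h = c * pairL μ f h := by
  simp only [pairL, Pi.smul_apply, Complex.real_smul, map_mul, Complex.conj_ofReal, mul_assoc,
    integral_const_mul, Complex.re_ofReal_mul]
  ring

lemma pairL_smul_right (c : ℝ) (f h : Ω → ℂ) : pairL μ f (c • h) = c * pairL μ f h := by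
  simp only [pairL, Pi.smul_apply, Complex.real_smul, mul_left_comm _ (c : ℂ),
    integral_const_mul, Complex.re_ofReal_mul]
  ring

lemma pairL_dualMap_self (hp : 2 ≤ p) (hf : MemLp f (ENNReal.ofReal p) μ) :
    pairL μ f (dualMap p f) = 2 * np μ p f ^ p := by
  simp only [pairL, conj_mul_dualMap hp, integral_complex_ofReal, Complex.ofReal_re,
    np_rpow_eq_integral (by linarith) hf]

lemma pairL_dualMap_le (hp : 2 ≤ p) (hf : MemLp f (ENNReal.ofReal p) μ)
    (hg : MemLp g (ENNReal.ofReal p) μ) :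
    pairL μ g (dualMap p f) ≤ 2 * (np μ p g * np μ p f ^ (p - 1)) := by
  have hp0 : 0 < p := by linarith
  have hp1 : p - 1 ≠ 0 := by linarith
  have hpq : p.HolderConjugate (p / (p - 1)) := Real.HolderConjugate.conjExponent (by linarith)
  have hJ : ∫ x, ‖dualMap p f x‖ ^ (p / (p - 1)) ∂μ = np μ p f ^ p := by
    rw [np_rpow_eq_integral hp0 hf]
    congr 1
    funext x
    rw [norm_dualMap hp, ← Real.rpow_mul (norm_nonneg _), mul_div_cancel₀ _ hp1]
  have hexp : (np μ p f ^ p) ^ (1 / (p / (p - 1))) = np μ p f ^ (p - 1) := by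
    rw [← Real.rpow_mul (np_nonneg f)]
    field_simp
  refine mul_le_mul_of_nonneg_left ?_ zero_le_two
  calc (∫ x, starRingEnd ℂ (g x) * dualMap p f x ∂μ).re
      ≤ ‖∫ x, starRingEnd ℂ (g x) * dualMap p f x ∂μ‖ := Complex.re_le_norm _
    _ ≤ ∫ x, ‖g x‖ * ‖dualMap p f x‖ ∂μ := by
      simpa only [norm_mul, Complex.norm_conj] using
        norm_integral_le_integral_norm (μ := μ) fun x => starRingEnd ℂ (g x) * dualMap p f x
    _ ≤ (∫ x, ‖g x‖ ^ p ∂μ) ^ (1 / p) *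
          (∫ x, ‖dualMap p f x‖ ^ (p / (p - 1)) ∂μ) ^ (1 / (p / (p - 1))) :=
      integral_mul_norm_le_Lp_mul_Lq hpq hg (memLp_dualMap hp hf)
    _ = np μ p g * np μ p f ^ (p - 1) := by rw [hJ, hexp, np_eq_integral_rpow hp0 hg]

end Duality

section Convexity

variable {Ω : Type*} [MeasurableSpace Ω] {μ : Measure Ω} {p : ℝ} {f g : Ω → ℂ}

lemma pairL_dualMap_le_of_np_eq_one (hp : 2 ≤ p) {u w : Ω → ℂ}
    (hu : MemLp u (ENNReal.ofReal p) μ) (hw : MemLp w (ENNReal.ofReal p) μ)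
    (hnu : np μ p u = 1) (hnw : np μ p w = 1) :
    pairL μ w (dualMap p u) ≤ 2 * (1 - np μ p (w - u) ^ p / (p * 2 ^ (p - 1))) := by
  have hclarkson : np μ p (w + u) ^ p + np μ p (w - u) ^ p ≤ 2 ^ p := by
    have h := np_add_rpow_add_np_sub_rpow_le hp hw hu
    have h2 : (2 : ℝ) ^ (p - 1) * 2 = 2 ^ p := by
      rw [Real.rpow_sub_one two_ne_zero]
      field_simp
    rw [hnu, hnw, Real.one_rpow] at h
    linarith
  have hsum := le_two_sub_of_rpow_add_rpow_le (by linarith) (np_nonneg _) hclarkson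
  have hholder := pairL_dualMap_le hp hu (hw.add hu)
  rw [pairL_add_left (integrable_conj_mul_dualMap hp hw hu)
    (integrable_conj_mul_dualMap hp hu hu), pairL_dualMap_self hp hu, hnu, Real.one_rpow,
    Real.one_rpow] at hholder
  linarith

lemma pairL_smul_dualMap_smul_le (hp : 2 ≤ p) {u w : Ω → ℂ}
    (hu : MemLp u (ENNReal.ofReal p) μ) (hw : MemLp w (ENNReal.ofReal p) μ)
    (hnu : np μ p u = 1) (hnw : np μ p w = 1) {A B : ℝ} (hA : 0 ≤ A) (hB : 0 ≤ B) :
    A ^ (2 - p) * pairL μ (B • w) (dualMap p (A • u)) ≤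
      2 * A * B - 2 * A * B * np μ p (w - u) ^ p / (p * 2 ^ (p - 1)) := by
  have h := pairL_dualMap_le_of_np_eq_one hp hu hw hnu hnw
  rw [dualMap_smul hp hA, pairL_smul_left, pairL_smul_right]
  calc A ^ (2 - p) * (B * (A ^ (p - 1) * pairL μ w (dualMap p u)))
      = A * B * pairL μ w (dualMap p u) := by
        linear_combination
          B * pairL μ w (dualMap p u) * rpow_two_sub_mul_rpow_sub_one (p := p) hA
    _ ≤ A * B * (2 * (1 - np μ p (w - u) ^ p / (p * 2 ^ (p - 1)))) := by gcongr
    _ = _ := by ring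

lemma pairL_sub_gradE (hp : 2 ≤ p) (hf : MemLp f (ENNReal.ofReal p) μ)
    (hg : MemLp g (ENNReal.ofReal p) μ) :
    pairL μ (g - f) (gradE μ p f) =
      np μ p f ^ (2 - p) * pairL μ g (dualMap p f) - 2 * np μ p f ^ 2 := by
  rw [gradE_eq_smul_dualMap, pairL_smul_right,
    pairL_sub_left (integrable_conj_mul_dualMap hp hg hf) (integrable_conj_mul_dualMap hp hf hf),
    pairL_dualMap_self hp hf, mul_sub, mul_left_comm,
    ← Real.rpow_add' (np_nonneg f) (by norm_num)]
  norm_num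

lemma exists_np_sub_le_and_pairL_dualMap_le (hp : 2 ≤ p) (hf : MemLp f (ENNReal.ofReal p) μ)
    (hg : MemLp g (ENNReal.ofReal p) μ) :
    ∃ σ ≥ 0, np μ p (g - f) ≤ min (np μ p f) (np μ p g) * σ + |np μ p g - np μ p f| ∧
      np μ p f ^ (2 - p) * pairL μ g (dualMap p f) ≤
        2 * np μ p f * np μ p g - 2 * np μ p f * np μ p g * σ ^ p / (p * 2 ^ (p - 1)) := by
  have hA0 := np_nonneg (μ := μ) (p := p) f
  have hB0 := np_nonneg (μ := μ) (p := p) g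
  by_cases hAB : 0 < np μ p f ∧ 0 < np μ p g
  · have hunit {h : Ω → ℂ} (hpos : 0 < np μ p h) : np μ p ((np μ p h)⁻¹ • h) = 1 := by
      rw [np_smul, abs_inv, abs_of_pos hpos, inv_mul_cancel₀ hpos.ne']
    have hu := hf.const_smul (np μ p f)⁻¹
    have hw := hg.const_smul (np μ p g)⁻¹
    have htri := np_smul_sub_smul_le (by linarith) hu hw (hunit hAB.1) (hunit hAB.2) hA0 hB0
    have hpair := pairL_smul_dualMap_smul_le hp hu hw (hunit hAB.1) (hunit hAB.2) hA0 hB0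
    rw [smul_inv_smul₀ hAB.1.ne', smul_inv_smul₀ hAB.2.ne'] at htri hpair
    exact ⟨_, np_nonneg _, htri, hpair⟩
  · have hmin : min (np μ p f) (np μ p g) = 0 ∧
        |np μ p g - np μ p f| = np μ p f + np μ p g := by
      rcases not_and_or.mp hAB with hA | hB
      · simp [le_antisymm (not_lt.mp hA) hA0, hB0]
      · simp [le_antisymm (not_lt.mp hB) hB0, hA0]
    refine ⟨0, le_rfl, ?_, ?_⟩
    · rw [hmin.1, hmin.2, zero_mul, zero_add, add_comm]
      exact np_sub_le (by linarith) hg hf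
    · rw [Real.zero_rpow (by linarith), mul_zero, zero_div, sub_zero]
      calc np μ p f ^ (2 - p) * pairL μ g (dualMap p f)
          ≤ np μ p f ^ (2 - p) * (2 * (np μ p g * np μ p f ^ (p - 1))) :=
            mul_le_mul_of_nonneg_left (pairL_dualMap_le hp hf hg) (Real.rpow_nonneg hA0 _)
        _ = 2 * np μ p f * np μ p g := by
            linear_combination 2 * np μ p g * rpow_two_sub_mul_rpow_sub_one (p := p) hA0

end Convexity

/-- for `2 < p < ∞`, the squared `L^p` norm satisfies
`E(f₂) ≥ E(f₁) + ⟨f₂-f₁, ∇E(f₁)⟩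
  + (1/(4p))(2/3)^{p-1}(‖f₁‖_p + ‖f₂‖_p)^{2-p}‖f₂-f₁‖_p^p`. -/
theorem stmt_13 {Ω : Type*} [MeasurableSpace Ω] (μ : Measure Ω) (p : ℝ) (hp : 2 < p) :
    ∀ f₁ f₂ : Ω → ℂ, MemLp f₁ (ENNReal.ofReal p) μ → MemLp f₂ (ENNReal.ofReal p) μ →
      np μ p f₁ ^ 2 + pairL μ (f₂ - f₁) (gradE μ p f₁) +
          (1 / (4 * p)) * (2 / 3 : ℝ) ^ (p - 1) *
            (np μ p f₁ + np μ p f₂) ^ (2 - p) * np μ p (f₂ - f₁) ^ p ≤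
        np μ p f₂ ^ 2 := by
  intro f₁ f₂ h₁ h₂
  obtain ⟨σ, hσ, hδ, hpair⟩ := exists_np_sub_le_and_pairL_dualMap_le hp.le h₁ h₂
  have hscalar := scalar_convexity_bound hp.le (np_nonneg f₁) (np_nonneg f₂) (np_nonneg _) hσ
    (np_sub_le (by linarith) h₂ h₁ |>.trans_eq (add_comm _ _)) hδ
  rw [pairL_sub_gradE hp.le h₁ h₂]
  linarith
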